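/- (Performance equivalence) Let π be a policy with σ-finite occupancy measure in an MDP, and π̃ the Markovian policy defined as the Radon-Nikodym derivative π̃(α|s) = dμ_γ^π(·,α)/dμ_γ^π(·)(s). Assuming the returns exist, ρ_γ^π = ρ_γ^{π̃}; i.e., for any policy there exists a Markovian policy with the same expected discounted return. -/

import Mathlib

/-!
State-action occupancy equivalence, finite case.

An MDP with finite state space `S` and action space `A`, initial distribution `p0`,
transition kernel `p`, and discount factor `γ < 1`. A (possibly non-Markovian) policy
maps a finite history (the past state-action pairs) and the current state to a
distribution over actions. The occupancy `occ γ p0 p π s a` is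
`E[∑ₜ γ^t 1(Sₜ = s, Aₜ = a)]`, computed by summing path probabilities over all
trajectory prefixes. The Markovian policy `π̃(a|s) = μ(s,a)/μ(s)` has the same
occupancy as `π`.
-/

open Finset
open scoped ENNReal

/-- The history (of past state-action pairs) seen at step `i` of a trajectory
prefix `w`. -/
def hist {S A : Type*} {t : ℕ} (w : Fin (t + 1) → S × A) (i : Fin (t + 1)) :
    Fin i.1 → S × A :=
  fun j => w ⟨j.1, lt_trans j.2 i.2⟩

/-- Probability of a trajectory prefix `w = ((S₀,A₀),…,(Sₜ,Aₜ))` under initial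
distribution `p0`, transition kernel `p` and history-dependent policy `π`. -/
noncomputable def pathProb {S A : Type*} [Fintype S] [Fintype A]
    (p0 : S → ℝ≥0∞) (p : S × A → S → ℝ≥0∞)
    (π : (t : ℕ) → (Fin t → S × A) → S → A → ℝ≥0∞)
    (t : ℕ) (w : Fin (t + 1) → S × A) : ℝ≥0∞ :=
  p0 (w 0).1 * (∏ i : Fin (t + 1), π i.1 (hist w i) (w i).1 (w i).2) *
    ∏ i : Fin t, p (w i.castSucc) (w i.succ).1

/-- Discounted occupancy `μ_γ^π(s,a) = E[∑ₜ γ^t 1(Sₜ = s, Aₜ = a)]`. -/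
noncomputable def occ {S A : Type*} [Fintype S] [Fintype A] [DecidableEq S] [DecidableEq A]
    (γ : ℝ≥0∞) (p0 : S → ℝ≥0∞) (p : S × A → S → ℝ≥0∞)
    (π : (t : ℕ) → (Fin t → S × A) → S → A → ℝ≥0∞) (s : S) (a : A) : ℝ≥0∞ :=
  ∑' t : ℕ, γ ^ t * ∑ w : Fin (t + 1) → S × A,
    (if w (Fin.last t) = (s, a) then pathProb p0 p π t w else 0)

/-- A Markovian policy, viewed as a history-dependent policy ignoring the history. -/
def liftMk {S A : Type*} (πm : S → A → ℝ≥0∞) :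
    (t : ℕ) → (Fin t → S × A) → S → A → ℝ≥0∞ :=
  fun _ _ s a => πm s a


/-- Expected discounted return `ρ_γ^π = E[∑ₜ γ^t E[r(Sₜ,Aₜ)]]`, where `rbar s a`
is the expected reward of the pair `(s,a)`. -/
noncomputable def perf {S A : Type*} [Fintype S] [Fintype A]
    (γ : ℝ≥0∞) (p0 : S → ℝ≥0∞) (p : S × A → S → ℝ≥0∞)
    (π : (t : ℕ) → (Fin t → S × A) → S → A → ℝ≥0∞) (rbar : S → A → ℝ) : ℝ :=
  ∑' t : ℕ, ∑ w : Fin (t + 1) → S × A,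
    (γ ^ t * pathProb p0 p π t w).toReal * rbar (w (Fin.last t)).1 (w (Fin.last t)).2

-- Auxiliary lemmas
section
set_option linter.unusedSectionVars false
variable {S A : Type*} [Fintype S] [Fintype A]

lemma sum_snoc {X M : Type*} [Fintype X] [AddCommMonoid M] {t : ℕ}
    (f : (Fin (t + 1) → X) → M) :
    ∑ w, f w = ∑ u : Fin t → X, ∑ x : X, f (Fin.snoc u x) := by
  rw [← Equiv.sum_comp (Fin.snocEquiv fun _ => X) f, Fintype.sum_prod_type]
  exact Finset.sum_comm

lemma hist_snoc_castSucc {t : ℕ} (u : Fin (t + 1) → S × A) (x : S × A) (i : Fin (t + 1)) :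
    hist (Fin.snoc u x) i.castSucc = hist u i := by
  funext j
  unfold hist
  have : (⟨j.1, lt_trans j.2 i.castSucc.2⟩ : Fin (t + 2)) =
      Fin.castSucc ⟨j.1, lt_trans j.2 i.2⟩ := rfl
  rw [this, Fin.snoc_castSucc]

lemma hist_snoc_last {t : ℕ} (u : Fin (t + 1) → S × A) (x : S × A) :
    hist (Fin.snoc u x) (Fin.last (t + 1)) = u := by
  funext j
  unfold hist
  have : (⟨j.1, lt_trans j.2 (Fin.last (t + 1)).2⟩ : Fin (t + 2)) = Fin.castSucc j := rfl
  rw [this, Fin.snoc_castSucc]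

lemma pathProb_snoc (p0 : S → ℝ≥0∞) (p : S × A → S → ℝ≥0∞)
    (π : (t : ℕ) → (Fin t → S × A) → S → A → ℝ≥0∞) (t : ℕ)
    (u : Fin (t + 1) → S × A) (x : S × A) :
    pathProb p0 p π (t + 1) (Fin.snoc u x) =
      pathProb p0 p π t u * (π (t + 1) u x.1 x.2 * p (u (Fin.last t)) x.1) := by
  unfold pathProb
  rw [Fin.prod_univ_castSucc (f := fun i : Fin (t + 1) =>
        p ((Fin.snoc u x : Fin (t+2) → S × A) i.castSucc)
          ((Fin.snoc u x : Fin (t+2) → S × A) i.succ).1),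
      Fin.prod_univ_castSucc]
  have h0 : (Fin.snoc u x : Fin (t+2) → S × A) 0 = u 0 := by
    have : (0 : Fin (t + 2)) = Fin.castSucc 0 := rfl
    rw [this, Fin.snoc_castSucc]
  simp only [Fin.snoc_castSucc, hist_snoc_castSucc, hist_snoc_last, Fin.snoc_last, h0]
  have h1 : ∀ i : Fin t, ((Fin.snoc u x : Fin (t+2) → S × A) i.castSucc.castSucc) =
      u i.castSucc := fun i => Fin.snoc_castSucc ..
  have h2 : ∀ i : Fin t, ((Fin.snoc u x : Fin (t+2) → S × A) i.castSucc.succ) = u i.succ := by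
    intro i
    rw [Fin.succ_castSucc, Fin.snoc_castSucc]
  have h3 : ((Fin.snoc u x : Fin (t+2) → S × A) (Fin.last t).castSucc) = u (Fin.last t) :=
    Fin.snoc_castSucc ..
  have h4 : ((Fin.snoc u x : Fin (t+2) → S × A) (Fin.last t).succ) = x := by
    rw [Fin.succ_last, Fin.snoc_last]
  simp only [h1, h2, h3, h4, Fin.coe_castSucc, Fin.val_last]
  ring
end

section
set_option linter.unusedSectionVars false
variable {S A : Type*} [Fintype S] [Fintype A] [DecidableEq S] [DecidableEq A]
variable (p0 : S → ℝ≥0∞) (p : S × A → S → ℝ≥0∞)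
variable (π : (t : ℕ) → (Fin t → S × A) → S → A → ℝ≥0∞)

/-- probability that the pair at time `t` is `(s,a)`. -/
noncomputable def pairProb (t : ℕ) (s : S) (a : A) : ℝ≥0∞ :=
  ∑ w : Fin (t + 1) → S × A, (if w (Fin.last t) = (s, a) then pathProb p0 p π t w else 0)

lemma pathProb_zero (w : Fin 1 → S × A) : pathProb p0 p π 0 w =
    p0 (w 0).1 * π 0 (fun j => j.elim0) (w 0).1 (w 0).2 := by
  unfold pathProb
  rw [Fin.prod_univ_one, Fin.prod_univ_zero, mul_one]
  exact congrArg (fun h => p0 (w 0).1 * π 0 h (w 0).1 (w 0).2) (funext fun j => j.elim0)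

lemma sum_pathProb (hp0 : ∑ s, p0 s = 1) (hp : ∀ x, ∑ s', p x s' = 1)
    (hπ : ∀ t h s, ∑ a, π t h s a = 1) (t : ℕ) :
    ∑ w : Fin (t + 1) → S × A, pathProb p0 p π t w = 1 := by
  induction t with
  | zero =>
    have hpz := pathProb_zero p0 p π
    calc (∑ w : Fin (0+1) → S × A, pathProb p0 p π 0 w)
        = ∑ y : S × A, p0 y.1 * π 0 (fun j => j.elim0) y.1 y.2 :=
          Fintype.sum_equiv (Equiv.funUnique (Fin 1) (S × A)) _ _ (fun w => hpz w)
      _ = ∑ s, ∑ a, p0 s * π 0 (fun j => j.elim0) s a := Fintype.sum_prod_type _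
      _ = ∑ s, p0 s * ∑ a, π 0 (fun j => j.elim0) s a := by
          simp [Finset.mul_sum]
      _ = 1 := by simp [hπ, hp0]
  | succ t ih =>
    rw [sum_snoc (pathProb p0 p π (t + 1))]
    calc ∑ u : Fin (t + 1) → S × A, ∑ x : S × A, pathProb p0 p π (t + 1) (Fin.snoc u x)
        = ∑ u : Fin (t + 1) → S × A, pathProb p0 p π t u := by
          refine Finset.sum_congr rfl fun u _ => ?_
          simp only [pathProb_snoc]
          rw [← Finset.mul_sum, Fintype.sum_prod_type]
          have : ∑ s, ∑ a, π (t + 1) u (s, a).1 (s, a).2 * p (u (Fin.last t)) (s, a).1 = 1 := by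
            calc ∑ s, ∑ a, π (t + 1) u s a * p (u (Fin.last t)) s
                = ∑ s, p (u (Fin.last t)) s * ∑ a, π (t + 1) u s a := by
                  refine Finset.sum_congr rfl fun s _ => ?_
                  rw [Finset.mul_sum]; exact Finset.sum_congr rfl fun a _ => mul_comm _ _
              _ = 1 := by simp only [hπ, mul_one, hp]
          rw [this, mul_one]
      _ = 1 := ih

lemma pairProb_zero' (s : S) (a : A) :
    pairProb p0 p π 0 s a = p0 s * π 0 (fun j => j.elim0) s a := by
  unfold pairProb
  have he : ∀ w : Fin 1 → S × A,
      (if w (Fin.last 0) = (s, a) then pathProb p0 p π 0 w else 0) =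
      (fun y : S × A => if y = (s, a) then p0 y.1 * π 0 (fun j => j.elim0) y.1 y.2 else 0)
        ((Equiv.funUnique (Fin 1) (S × A)) w) := by
    intro w
    simp only [Equiv.funUnique_apply]
    have h1 : w (Fin.last 0) = w default := rfl
    rw [h1, pathProb_zero]
    rcases eq_or_ne (w default) (s, a) with h | h
    · simp only [h, if_pos rfl]
      simp [show w 0 = (s, a) from h]
    · simp only [if_neg h]
  rw [Fintype.sum_equiv (Equiv.funUnique (Fin 1) (S × A)) _
      (fun y : S × A => if y = (s, a) then p0 y.1 * π 0 (fun j => j.elim0) y.1 y.2 else 0) he,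
    Finset.sum_ite_eq' Finset.univ (s, a)
      (fun y : S × A => p0 y.1 * π 0 (fun j => j.elim0) y.1 y.2)]
  simp

lemma pairProb_zero (hπ : ∀ t h s, ∑ a, π t h s a = 1) (s : S) :
    ∑ a, pairProb p0 p π 0 s a = p0 s := by
  simp only [pairProb_zero']
  rw [← Finset.mul_sum, hπ, mul_one]

lemma pairProb_succ (t : ℕ) (s : S) (a : A) :
    pairProb p0 p π (t + 1) s a =
      ∑ u : Fin (t + 1) → S × A,
        pathProb p0 p π t u * (π (t + 1) u s a * p (u (Fin.last t)) s) := by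
  unfold pairProb
  rw [sum_snoc]
  refine Finset.sum_congr rfl fun u _ => ?_
  have hlast : ∀ x : S × A, (Fin.snoc u x : Fin (t + 2) → S × A) (Fin.last (t + 1)) = x :=
    fun x => Fin.snoc_last ..
  calc ∑ x : S × A, (if (Fin.snoc u x : Fin (t+2) → S × A) (Fin.last (t + 1)) = (s, a)
          then pathProb p0 p π (t + 1) (Fin.snoc u x) else 0)
      = ∑ x : S × A, (if x = (s, a) then pathProb p0 p π (t + 1) (Fin.snoc u x) else 0) := by
        refine Finset.sum_congr rfl fun x _ => ?_; rw [hlast]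
    _ = pathProb p0 p π (t + 1) (Fin.snoc u (s, a)) := by
        rw [Finset.sum_ite_eq' Finset.univ (s, a)
          (fun x => pathProb p0 p π (t + 1) (Fin.snoc u x))]
        simp
    _ = _ := by rw [pathProb_snoc]

lemma sum_mul_last {M : Type*} [NonAssocSemiring M] (t : ℕ)
    (g : (Fin (t + 1) → S × A) → M) (h : S × A → M) :
    ∑ w : Fin (t + 1) → S × A, g w * h (w (Fin.last t)) =
      ∑ y : S × A, (∑ w : Fin (t + 1) → S × A,
        if w (Fin.last t) = y then g w else 0) * h y := by
  have : ∀ y : S × A, (∑ w : Fin (t + 1) → S × A,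
      if w (Fin.last t) = y then g w else 0) * h y =
      ∑ w : Fin (t + 1) → S × A, if w (Fin.last t) = y then g w * h y else 0 := by
    intro y
    rw [Finset.sum_mul]
    exact Finset.sum_congr rfl fun w _ => by rw [ite_mul, zero_mul]
  simp only [this]
  rw [Finset.sum_comm]
  refine Finset.sum_congr rfl fun w _ => ?_
  rw [Finset.sum_ite_eq Finset.univ (w (Fin.last t)) (fun y => g w * h y)]
  simp

lemma sum_pairProb_succ (hπ : ∀ t h s, ∑ a, π t h s a = 1) (t : ℕ) (s : S) :
    ∑ a, pairProb p0 p π (t + 1) s a =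
      ∑ y : S × A, pairProb p0 p π t y.1 y.2 * p y s := by
  have h1 : ∑ a, pairProb p0 p π (t + 1) s a =
      ∑ u : Fin (t + 1) → S × A, pathProb p0 p π t u * p (u (Fin.last t)) s := by
    simp only [pairProb_succ]
    rw [Finset.sum_comm]
    refine Finset.sum_congr rfl fun u _ => ?_
    calc ∑ a, pathProb p0 p π t u * (π (t + 1) u s a * p (u (Fin.last t)) s)
        = pathProb p0 p π t u * p (u (Fin.last t)) s * ∑ a, π (t + 1) u s a := by
          rw [Finset.mul_sum]
          exact Finset.sum_congr rfl fun a _ => by ring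
      _ = _ := by rw [hπ, mul_one]
  rw [h1, sum_mul_last t (pathProb p0 p π t) (fun y => p y s)]
  refine Finset.sum_congr rfl fun y _ => ?_
  congr 1

lemma pairProb_swap (πm : S → A → ℝ≥0∞) (t : ℕ) (s : S) (a b : A) :
    πm s b * pairProb p0 p (liftMk πm) t s a =
      πm s a * pairProb p0 p (liftMk πm) t s b := by
  cases t with
  | zero =>
    rw [pairProb_zero', pairProb_zero']
    simp only [liftMk]
    ring
  | succ t =>
    rw [pairProb_succ, pairProb_succ, Finset.mul_sum, Finset.mul_sum]
    refine Finset.sum_congr rfl fun u _ => ?_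
    simp only [liftMk]
    ring

lemma pairProb_markov (πm : S → A → ℝ≥0∞) (hπm : ∀ s, ∑ a, πm s a = 1)
    (t : ℕ) (s : S) (a : A) :
    pairProb p0 p (liftMk πm) t s a = πm s a * ∑ b, pairProb p0 p (liftMk πm) t s b := by
  calc pairProb p0 p (liftMk πm) t s a
      = ∑ b, πm s b * pairProb p0 p (liftMk πm) t s a := by
        rw [← Finset.sum_mul, hπm, one_mul]
    _ = ∑ b, πm s a * pairProb p0 p (liftMk πm) t s b :=
        Finset.sum_congr rfl fun b _ => pairProb_swap p0 p πm t s a b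
    _ = _ := by rw [Finset.mul_sum]

noncomputable def occ' (γ : ℝ≥0∞) (s : S) (a : A) : ℝ≥0∞ :=
  ∑' t : ℕ, γ ^ t * pairProb p0 p π t s a

lemma occ_eq (γ : ℝ≥0∞) (s : S) (a : A) :
    occ γ p0 p π s a = ∑' t : ℕ, γ ^ t * pairProb p0 p π t s a := rfl

lemma pairProb_le_one (hp0 : ∑ s, p0 s = 1) (hp : ∀ x, ∑ s', p x s' = 1)
    (hπ : ∀ t h s, ∑ a, π t h s a = 1) (t : ℕ) (s : S) (a : A) :
    pairProb p0 p π t s a ≤ 1 := by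
  rw [← sum_pathProb p0 p π hp0 hp hπ t]
  exact Finset.sum_le_sum fun w _ => by
    split <;> simp [le_refl]

lemma occ_ne_top (γ : ℝ≥0∞) (hγ : γ < 1)
    (hp0 : ∑ s, p0 s = 1) (hp : ∀ x, ∑ s', p x s' = 1)
    (hπ : ∀ t h s, ∑ a, π t h s a = 1) (s : S) (a : A) :
    occ γ p0 p π s a ≠ ⊤ := by
  have h1 : occ γ p0 p π s a ≤ ∑' t : ℕ, γ ^ t := by
    rw [occ_eq]
    refine ENNReal.tsum_le_tsum fun t => ?_
    calc γ ^ t * pairProb p0 p π t s a ≤ γ ^ t * 1 :=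
          mul_le_mul_right (pairProb_le_one p0 p π hp0 hp hπ t s a) _
      _ = γ ^ t := mul_one _
  have h2 : (∑' t : ℕ, γ ^ t) ≠ ⊤ := by
    rw [ENNReal.tsum_geometric]
    refine ENNReal.inv_ne_top.mpr ?_
    simp [tsub_eq_zero_iff_le, not_le, hγ]
  exact fun h => h2 (top_le_iff.mp (h ▸ h1))

noncomputable def nu (γ : ℝ≥0∞) (s : S) : ℝ≥0∞ := ∑ a, occ γ p0 p π s a

lemma nu_eq (γ : ℝ≥0∞) (s : S) :
    nu p0 p π γ s = ∑' t : ℕ, γ ^ t * ∑ a, pairProb p0 p π t s a := by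
  unfold nu
  simp only [occ_eq]
  rw [← Summable.tsum_finsetSum (fun a _ => ENNReal.summable)]
  exact tsum_congr fun t => by rw [Finset.mul_sum]

lemma nu_ne_top (γ : ℝ≥0∞) (hγ : γ < 1)
    (hp0 : ∑ s, p0 s = 1) (hp : ∀ x, ∑ s', p x s' = 1)
    (hπ : ∀ t h s, ∑ a, π t h s a = 1) (s : S) :
    nu p0 p π γ s ≠ ⊤ := by
  unfold nu
  exact (ENNReal.sum_lt_top.mpr fun a _ =>
    lt_top_iff_ne_top.mpr (occ_ne_top p0 p π γ hγ hp0 hp hπ s a)).ne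

lemma nu_flow (γ : ℝ≥0∞) (hπ : ∀ t h s, ∑ a, π t h s a = 1) (s : S) :
    nu p0 p π γ s = p0 s + γ * ∑ y : S × A, occ γ p0 p π y.1 y.2 * p y s := by
  rw [nu_eq]
  rw [tsum_eq_zero_add' ENNReal.summable]
  congr 1
  · rw [pow_zero, one_mul, pairProb_zero p0 p π hπ s]
  calc ∑' t : ℕ, γ ^ (t + 1) * ∑ a, pairProb p0 p π (t + 1) s a
      = ∑' t : ℕ, γ * (γ ^ t * ∑ y : S × A, pairProb p0 p π t y.1 y.2 * p y s) := by
        refine tsum_congr fun t => ?_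
        rw [sum_pairProb_succ p0 p π hπ t s, pow_succ]
        ring
    _ = γ * ∑' t : ℕ, γ ^ t * ∑ y : S × A, pairProb p0 p π t y.1 y.2 * p y s :=
        ENNReal.tsum_mul_left
    _ = γ * ∑ y : S × A, occ γ p0 p π y.1 y.2 * p y s := by
        congr 1
        calc ∑' t : ℕ, γ ^ t * ∑ y : S × A, pairProb p0 p π t y.1 y.2 * p y s
            = ∑ y : S × A, ∑' t : ℕ, γ ^ t * pairProb p0 p π t y.1 y.2 * p y s := by
              rw [← Summable.tsum_finsetSum (fun y _ => ENNReal.summable)]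
              refine tsum_congr fun t => ?_
              rw [Finset.mul_sum]
              exact Finset.sum_congr rfl fun y _ => by ring
          _ = ∑ y : S × A, occ γ p0 p π y.1 y.2 * p y s := by
              refine Finset.sum_congr rfl fun y _ => ?_
              rw [occ_eq, ← ENNReal.tsum_mul_right]
lemma occ_le_nu (γ : ℝ≥0∞) (s : S) (a : A) : occ γ p0 p π s a ≤ nu p0 p π γ s :=
  Finset.single_le_sum (fun b _ => zero_le) (Finset.mem_univ a)

lemma occ_markov (πm : S → A → ℝ≥0∞) (hπm : ∀ s, ∑ a, πm s a = 1)
    (γ : ℝ≥0∞) (s : S) (a : A) :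
    occ γ p0 p (liftMk πm) s a = πm s a * nu p0 p (liftMk πm) γ s := by
  rw [occ_eq, nu_eq]
  rw [← ENNReal.tsum_mul_left]
  refine tsum_congr fun t => ?_
  rw [pairProb_markov p0 p πm hπm t s a]
  ring

end

section
set_option linter.unusedSectionVars false
variable {S : Type*} [Fintype S]

lemma fixed_point_unique (γ : ℝ≥0∞) (hγ : γ < 1)
    (c : S → ℝ≥0∞) (K : S → S → ℝ≥0∞) (hK : ∀ s s', K s s' ≠ ⊤)
    (hKcol : ∀ s', ∑ s, K s s' = 1)
    (f g : S → ℝ≥0∞) (hf : ∀ s, f s ≠ ⊤) (hg : ∀ s, g s ≠ ⊤)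
    (hfe : ∀ s, f s = c s + γ * ∑ s', K s s' * f s')
    (hge : ∀ s, g s = c s + γ * ∑ s', K s s' * g s') :
    f = g := by
  have hγt : γ ≠ ⊤ := hγ.ne_top
  have hγ1 : γ.toReal < 1 := by
    have := (ENNReal.toReal_lt_toReal hγt ENNReal.one_ne_top).mpr hγ
    simpa using this
  set F : S → ℝ := fun s => (f s).toReal with hF
  set G : S → ℝ := fun s => (g s).toReal with hG
  have hc : ∀ s, c s ≠ ⊤ := by
    intro s
    intro hc
    exact hf s (by rw [hfe s, hc, top_add])
  have hsum : ∀ (h : S → ℝ≥0∞) (_ : ∀ s, h s ≠ ⊤) (s : S),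
      (∑ s', K s s' * h s') ≠ ⊤ := by
    intro h hh s
    refine (ENNReal.sum_lt_top.mpr fun s' _ => ?_).ne
    exact ENNReal.mul_lt_top (lt_top_iff_ne_top.mpr (hK s s')) (lt_top_iff_ne_top.mpr (hh s'))
  have key : ∀ (h : S → ℝ≥0∞) (hh : ∀ s, h s ≠ ⊤)
      (hhe : ∀ s, h s = c s + γ * ∑ s', K s s' * h s') (s : S),
      (h s).toReal = (c s).toReal + γ.toReal * ∑ s', (K s s').toReal * (h s').toReal := by
    intro h hh hhe s
    rw [hhe s, ENNReal.toReal_add (hc s) (ENNReal.mul_ne_top hγt (hsum h hh s)),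
      ENNReal.toReal_mul]
    congr 1
    congr 1
    rw [ENNReal.toReal_sum (fun s' _ => ENNReal.mul_ne_top (hK s s') (hh s'))]
    exact Finset.sum_congr rfl fun s' _ => ENNReal.toReal_mul
  have hdiff : ∀ s, F s - G s = γ.toReal * ∑ s', (K s s').toReal * (F s' - G s') := by
    intro s
    simp only [hF, hG]
    rw [key f hf hfe s, key g hg hge s]
    rw [Finset.mul_sum, Finset.mul_sum, Finset.mul_sum]
    have hz : ∑ i : S, γ.toReal * ((K s i).toReal * ((f i).toReal - (g i).toReal)) =
        ∑ i : S, (γ.toReal * ((K s i).toReal * (f i).toReal) -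
          γ.toReal * ((K s i).toReal * (g i).toReal)) :=
      Finset.sum_congr rfl fun i _ => by ring
    rw [hz, Finset.sum_sub_distrib]
    ring
  set d : ℝ := ∑ s, |F s - G s| with hd
  have hdle : d ≤ γ.toReal * d := by
    calc d = ∑ s, |F s - G s| := rfl
      _ ≤ ∑ s, γ.toReal * ∑ s', (K s s').toReal * |F s' - G s'| := by
          refine Finset.sum_le_sum fun s _ => ?_
          rw [hdiff s, abs_mul, abs_of_nonneg ENNReal.toReal_nonneg]
          refine mul_le_mul_of_nonneg_left ?_ ENNReal.toReal_nonneg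
          refine (Finset.abs_sum_le_sum_abs _ _).trans ?_
          refine Finset.sum_le_sum fun s' _ => ?_
          rw [abs_mul, abs_of_nonneg ENNReal.toReal_nonneg]
      _ = γ.toReal * ∑ s', (∑ s, (K s s').toReal) * |F s' - G s'| := by
          rw [← Finset.mul_sum, Finset.sum_comm]
          congr 1
          exact Finset.sum_congr rfl fun s' _ => by rw [Finset.sum_mul]
      _ = γ.toReal * d := by
          congr 1
          refine Finset.sum_congr rfl fun s' _ => ?_
          rw [← ENNReal.toReal_sum (fun s _ => hK s s'), hKcol s']
          simp
  have hd0 : 0 ≤ d := Finset.sum_nonneg fun s _ => abs_nonneg _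
  have : d = 0 := by nlinarith
  have habs : ∀ s ∈ Finset.univ, |F s - G s| = 0 :=
    (Finset.sum_eq_zero_iff_of_nonneg (fun s _ => abs_nonneg _)).mp this
  funext s
  have : F s = G s := by
    have := habs s (Finset.mem_univ s)
    have := abs_eq_zero.mp this
    linarith
  exact (ENNReal.toReal_eq_toReal_iff' (hf s) (hg s)).mp this

end

section
set_option linter.unusedSectionVars false
variable {S A : Type*} [Fintype S] [Fintype A] [DecidableEq S] [DecidableEq A]
variable (p0 : S → ℝ≥0∞) (p : S × A → S → ℝ≥0∞)
variable (π : (t : ℕ) → (Fin t → S × A) → S → A → ℝ≥0∞)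

lemma occ_tπ (γ : ℝ≥0∞) (hγ : γ < 1)
    (hp0 : ∑ s, p0 s = 1) (hp : ∀ x, ∑ s', p x s' = 1)
    (hπ : ∀ t h s, ∑ a, π t h s a = 1)
    (tπ : S → A → ℝ≥0∞)
    (htπ : ∀ s a, (∑ b, occ γ p0 p π s b) ≠ 0 →
      tπ s a = occ γ p0 p π s a / (∑ b, occ γ p0 p π s b))
    (s : S) (a : A) :
    occ γ p0 p π s a = tπ s a * nu p0 p π γ s := by
  by_cases h : nu p0 p π γ s = 0
  · have h1 : occ γ p0 p π s a = 0 :=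
      le_antisymm (h ▸ occ_le_nu p0 p π γ s a) zero_le
    rw [h1, h, mul_zero]
  · have h' : (∑ b, occ γ p0 p π s b) ≠ 0 := h
    rw [htπ s a h']
    have hnt : nu p0 p π γ s ≠ ⊤ := nu_ne_top p0 p π γ hγ hp0 hp hπ s
    show _ = occ γ p0 p π s a / nu p0 p π γ s * nu p0 p π γ s
    rw [ENNReal.div_mul_cancel h hnt]

lemma occ_equiv (γ : ℝ≥0∞) (hγ : γ < 1)
    (hp0 : ∑ s, p0 s = 1) (hp : ∀ x, ∑ s', p x s' = 1)
    (hπ : ∀ t h s, ∑ a, π t h s a = 1)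
    (tπ : S → A → ℝ≥0∞)
    (htπ : ∀ s a, (∑ b, occ γ p0 p π s b) ≠ 0 →
      tπ s a = occ γ p0 p π s a / (∑ b, occ γ p0 p π s b))
    (htπ1 : ∀ s, ∑ a, tπ s a = 1) (s : S) (a : A) :
    occ γ p0 p (liftMk tπ) s a = occ γ p0 p π s a := by
  have hlift : ∀ (t : ℕ) (h : Fin t → S × A) (s : S), ∑ a, (liftMk tπ) t h s a = 1 :=
    fun _ _ s => htπ1 s
  set K : S → S → ℝ≥0∞ := fun s s' => ∑ a', tπ s' a' * p (s', a') s with hKdef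
  have htπ_le : ∀ s a, tπ s a ≤ 1 := fun s a =>
    (htπ1 s) ▸ Finset.single_le_sum (fun b _ => zero_le) (Finset.mem_univ a)
  have hp_le : ∀ x s', p x s' ≤ 1 := fun x s' =>
    (hp x) ▸ Finset.single_le_sum (fun b _ => zero_le) (Finset.mem_univ s')
  have hKne : ∀ s s', K s s' ≠ ⊤ := by
    intro s s'
    refine (ENNReal.sum_lt_top.mpr fun a' _ => ?_).ne
    exact ENNReal.mul_lt_top ((htπ_le s' a').trans_lt (by simp))
      ((hp_le _ _).trans_lt (by simp))
  have hKcol : ∀ s', ∑ s, K s s' = 1 := by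
    intro s'
    rw [hKdef]
    rw [Finset.sum_comm]
    calc ∑ a', ∑ s, tπ s' a' * p (s', a') s
        = ∑ a', tπ s' a' * ∑ s, p (s', a') s := by
          exact Finset.sum_congr rfl fun a' _ => (Finset.mul_sum _ _ _).symm
      _ = 1 := by simp only [hp, mul_one, htπ1]
  have hrearrange : ∀ (ν : S → ℝ≥0∞) (s : S),
      ∑ y : S × A, tπ y.1 y.2 * ν y.1 * p y s = ∑ s', K s s' * ν s' := by
    intro ν s
    rw [Fintype.sum_prod_type]
    refine Finset.sum_congr rfl fun s' _ => ?_
    rw [Finset.sum_mul]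
    refine Finset.sum_congr rfl fun a' _ => ?_
    ring
  have hflowπ : ∀ s, nu p0 p π γ s = p0 s + γ * ∑ s', K s s' * nu p0 p π γ s' := by
    intro s
    rw [nu_flow p0 p π γ hπ s]
    congr 1
    rw [← hrearrange (nu p0 p π γ) s]
    congr 1
    refine Finset.sum_congr rfl fun y _ => ?_
    rw [occ_tπ p0 p π γ hγ hp0 hp hπ tπ htπ y.1 y.2]
  have hflowm : ∀ s, nu p0 p (liftMk tπ) γ s =
      p0 s + γ * ∑ s', K s s' * nu p0 p (liftMk tπ) γ s' := by
    intro s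
    rw [nu_flow p0 p (liftMk tπ) γ hlift s]
    congr 1
    rw [← hrearrange (nu p0 p (liftMk tπ) γ) s]
    congr 1
    refine Finset.sum_congr rfl fun y _ => ?_
    rw [occ_markov p0 p tπ htπ1 γ y.1 y.2]
  have hnu_eq : nu p0 p (liftMk tπ) γ = nu p0 p π γ :=
    fixed_point_unique γ hγ p0 K hKne hKcol _ _
      (nu_ne_top p0 p (liftMk tπ) γ hγ hp0 hp hlift)
      (nu_ne_top p0 p π γ hγ hp0 hp hπ) hflowm hflowπ
  rw [occ_markov p0 p tπ htπ1 γ s a, hnu_eq,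
    ← occ_tπ p0 p π γ hγ hp0 hp hπ tπ htπ s a]

end

section
set_option linter.unusedSectionVars false
variable {S A : Type*} [Fintype S] [Fintype A] [DecidableEq S] [DecidableEq A]
variable (p0 : S → ℝ≥0∞) (p : S × A → S → ℝ≥0∞)
variable (π : (t : ℕ) → (Fin t → S × A) → S → A → ℝ≥0∞)

lemma pathProb_le_one (hp0 : ∑ s, p0 s = 1) (hp : ∀ x, ∑ s', p x s' = 1)
    (hπ : ∀ t h s, ∑ a, π t h s a = 1) (t : ℕ) (w : Fin (t + 1) → S × A) :
    pathProb p0 p π t w ≤ 1 := by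
  rw [← sum_pathProb p0 p π hp0 hp hπ t]
  exact Finset.single_le_sum (fun v _ => zero_le) (Finset.mem_univ w)

lemma perf_eq_occ (γ : ℝ≥0∞) (hγ : γ < 1)
    (hp0 : ∑ s, p0 s = 1) (hp : ∀ x, ∑ s', p x s' = 1)
    (hπ : ∀ t h s, ∑ a, π t h s a = 1) (rbar : S → A → ℝ) :
    perf γ p0 p π rbar =
      ∑ y : S × A, (occ γ p0 p π y.1 y.2).toReal * rbar y.1 y.2 := by
  have hγt : γ ≠ ⊤ := hγ.ne_top
  have hγpow : ∀ t : ℕ, γ ^ t ≠ ⊤ := fun t => ENNReal.pow_ne_top hγt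
  have hpne : ∀ (t : ℕ) (w : Fin (t + 1) → S × A), γ ^ t * pathProb p0 p π t w ≠ ⊤ :=
    fun t w => ENNReal.mul_ne_top (hγpow t)
      (lt_top_iff_ne_top.mp ((pathProb_le_one p0 p π hp0 hp hπ t w).trans_lt (by simp)))
  have hqne : ∀ (t : ℕ) (y : S × A), γ ^ t * pairProb p0 p π t y.1 y.2 ≠ ⊤ :=
    fun t y => ENNReal.mul_ne_top (hγpow t)
      (lt_top_iff_ne_top.mp ((pairProb_le_one p0 p π hp0 hp hπ t y.1 y.2).trans_lt (by simp)))
  have step1 : ∀ t : ℕ, ∑ w : Fin (t + 1) → S × A,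
      (γ ^ t * pathProb p0 p π t w).toReal * rbar (w (Fin.last t)).1 (w (Fin.last t)).2 =
      ∑ y : S × A, (γ ^ t * pairProb p0 p π t y.1 y.2).toReal * rbar y.1 y.2 := by
    intro t
    rw [sum_mul_last t (fun w => (γ ^ t * pathProb p0 p π t w).toReal)
      (fun y => rbar y.1 y.2)]
    refine Finset.sum_congr rfl fun y _ => ?_
    congr 1
    calc ∑ w : Fin (t + 1) → S × A,
          (if w (Fin.last t) = y then (γ ^ t * pathProb p0 p π t w).toReal else 0)
        = ∑ w : Fin (t + 1) → S × A,
          (if w (Fin.last t) = y then γ ^ t * pathProb p0 p π t w else 0).toReal := by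
          refine Finset.sum_congr rfl fun w _ => ?_
          rw [apply_ite ENNReal.toReal]
          simp
      _ = (∑ w : Fin (t + 1) → S × A,
          (if w (Fin.last t) = y then γ ^ t * pathProb p0 p π t w else 0)).toReal := by
          rw [ENNReal.toReal_sum]
          intro w _
          split
          · exact hpne t w
          · exact ENNReal.zero_ne_top
      _ = (γ ^ t * pairProb p0 p π t y.1 y.2).toReal := by
          congr 1
          unfold pairProb
          rw [Finset.mul_sum]
          refine Finset.sum_congr rfl fun w _ => ?_
          rw [mul_ite, mul_zero]
  have hsummable : ∀ y : S × A,
      Summable fun t : ℕ => (γ ^ t * pairProb p0 p π t y.1 y.2).toReal * rbar y.1 y.2 := by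
    intro y
    rw [← summable_abs_iff]
    refine Summable.of_nonneg_of_le (fun t => abs_nonneg _) (fun t => ?_)
      ((summable_geometric_of_lt_one ENNReal.toReal_nonneg
        ((ENNReal.toReal_lt_toReal hγt ENNReal.one_ne_top).mpr hγ |>.trans_le (by simp))).mul_right
        |rbar y.1 y.2|)
    rw [abs_mul, ENNReal.abs_toReal]
    refine mul_le_mul_of_nonneg_right ?_ (abs_nonneg _)
    calc (γ ^ t * pairProb p0 p π t y.1 y.2).toReal
        ≤ (γ ^ t * 1).toReal := by
          refine ENNReal.toReal_mono (by simpa using hγpow t) ?_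
          exact mul_le_mul_right (pairProb_le_one p0 p π hp0 hp hπ t y.1 y.2) _
      _ = γ.toReal ^ t := by rw [mul_one, ENNReal.toReal_pow]
  calc perf γ p0 p π rbar
      = ∑' t : ℕ, ∑ y : S × A,
          (γ ^ t * pairProb p0 p π t y.1 y.2).toReal * rbar y.1 y.2 := tsum_congr step1
    _ = ∑ y : S × A, ∑' t : ℕ,
          (γ ^ t * pairProb p0 p π t y.1 y.2).toReal * rbar y.1 y.2 :=
        Summable.tsum_finsetSum fun y _ => hsummable y
    _ = ∑ y : S × A, (occ γ p0 p π y.1 y.2).toReal * rbar y.1 y.2 := by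
        refine Finset.sum_congr rfl fun y _ => ?_
        rw [tsum_mul_right]
        congr 1
        rw [occ_eq, ENNReal.tsum_toReal_eq (fun t => hqne t y)]

end

/-- Performance equivalence: the Markovian projection `π̃` of `π` (its
Radon–Nikodym derivative, here the ratio of occupancies) has the same expected
discounted return as `π`. -/
theorem performance_equivalence {S A : Type*}
    [Fintype S] [Fintype A] [DecidableEq S] [DecidableEq A]
    (γ : ℝ≥0∞) (hγ : γ < 1)
    (p0 : S → ℝ≥0∞) (hp0 : ∑ s, p0 s = 1)
    (p : S × A → S → ℝ≥0∞) (hp : ∀ x, ∑ s', p x s' = 1)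
    (π : (t : ℕ) → (Fin t → S × A) → S → A → ℝ≥0∞)
    (hπ : ∀ t h s, ∑ a, π t h s a = 1)
    (rbar : S → A → ℝ) (rmax : ℝ) (hr : ∀ s a, |rbar s a| ≤ rmax)
    (tπ : S → A → ℝ≥0∞)
    (htπ : ∀ s a, (∑ b, occ γ p0 p π s b) ≠ 0 →
      tπ s a = occ γ p0 p π s a / (∑ b, occ γ p0 p π s b))
    (htπ1 : ∀ s, ∑ a, tπ s a = 1) :
    perf γ p0 p (liftMk tπ) rbar = perf γ p0 p π rbar := by
  rw [perf_eq_occ p0 p (liftMk tπ) γ hγ hp0 hp (fun _ _ s => htπ1 s) rbar,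
      perf_eq_occ p0 p π γ hγ hp0 hp hπ rbar]
  refine Finset.sum_congr rfl fun y _ => ?_
  rw [occ_equiv p0 p π γ hγ hp0 hp hπ tπ htπ htπ1 y.1 y.2]
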